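/- (Suboptimality of greedy query selection) There exist a uniform random variable P on 8 outcomes and four binary queries q_A, q_B, q_C, q_D each with I(P; qᵢ) = 1 bit, such that max over pairs not containing q_B of I(P; pair) = 2 bits while every pair containing q_B has I(P; pair) = 3 − (3/4)log₂3 < 2 bits; hence the single-step (greedy) mutual-information criterion does not distinguish the globally optimal first query. -/

import Mathlib

/-! A deterministic query `f` of a uniform `P` on eight points has `I(P; f) = H(f)`, which is
`3 - (1/8) ∑ₚ log₂ |f⁻¹(f p)|`. The single queries and the pairs avoiding `q_B` split the
eight points into cells of equal size (four cells of two for the pairs), giving 1 and 2 bits. Each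
pair containing `q_B` has two singleton cells and two cells of three, giving
`3 - (6/8) log₂ 3`, which is below 2 because `2⁴ < 3³`. -/

open Finset

/-- Mutual information (in bits) between a uniform variable on `Fin 8` and the
deterministic query `f`, written as the double sum
`∑_{p,a} Pr(p,a) log₂ (Pr(p,a) / (Pr(p) Pr(a)))`. -/
noncomputable def mutualInfo8 {α : Type*} [Fintype α] [DecidableEq α] (f : Fin 8 → α) : ℝ :=
  ∑ p : Fin 8, ∑ a : α,
    (if f p = a then (1 : ℝ) / 8 else 0) *
      Real.logb 2 ((if f p = a then (1 : ℝ) / 8 else 0) /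
        ((1 / 8) * ((({p' : Fin 8 | f p' = a} : Finset (Fin 8)).card : ℝ) / 8)))

open Real

def fiberCard {ι α : Type*} [Fintype ι] [DecidableEq α] (f : ι → α) (p : ι) : ℕ :=
  #{p' | f p' = f p}

lemma fiberCard_pos {ι α : Type*} [Fintype ι] [DecidableEq α] (f : ι → α) (p : ι) :
    0 < fiberCard f p :=
  card_pos.mpr ⟨p, mem_filter.mpr ⟨mem_univ p, rfl⟩⟩

section MutualInfo

variable {α : Type*} [Fintype α] [DecidableEq α]

lemma mutualInfo8_eq_three_sub (f : Fin 8 → α) :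
    mutualInfo8 f = 3 - (∑ p, logb 2 (fiberCard f p)) / 8 := by
  have split : (3 : ℝ) - (∑ p, logb 2 (fiberCard f p)) / 8 =
      ∑ p, (3 - logb 2 (fiberCard f p)) / 8 := by
    rw [← sum_div, sum_sub_distrib, sum_const, card_univ, Fintype.card_fin, nsmul_eq_mul]
    ring
  rw [split, mutualInfo8]
  refine sum_congr rfl fun p _ => ?_
  have hc : (fiberCard f p : ℝ) ≠ 0 := by exact_mod_cast (fiberCard_pos f p).ne'
  rw [sum_eq_single (f p) (fun a _ ha => by simp [Ne.symm ha]) (by simp), if_pos rfl]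
  change (1 / 8 : ℝ) * logb 2 (1 / 8 / (1 / 8 * ((fiberCard f p : ℝ) / 8))) = _
  rw [show (1 : ℝ) / 8 / (1 / 8 * ((fiberCard f p : ℝ) / 8)) = 8 / fiberCard f p by
    field_simp, logb_div (by norm_num) hc, show (8 : ℝ) = 2 ^ 3 by norm_num, logb_pow,
    logb_self_eq_one one_lt_two]
  ring

lemma mutualInfo8_of_fiberCard_eq_two_pow {f : Fin 8 → α} {n : ℕ}
    (h : ∀ p, fiberCard f p = 2 ^ n) : mutualInfo8 f = 3 - n := by
  simp [mutualInfo8_eq_three_sub, h, logb_pow]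

lemma mutualInfo8_of_fiberCard_eq_ite {f : Fin 8 → α} {S : Finset (Fin 8)} (hS : #S = 2)
    (h : ∀ p, fiberCard f p = if p ∈ S then 1 else 3) :
    mutualInfo8 f = 3 - (3 / 4) * logb 2 3 := by
  have hSc : #Sᶜ = 6 := by rw [card_compl, hS]; rfl
  have sum_eq : ∑ p, logb 2 (fiberCard f p) = 6 * logb 2 3 := by
    simp only [h, Nat.cast_ite, Nat.cast_one, apply_ite (logb 2), logb_one]
    rw [sum_ite, sum_const_zero, zero_add, sum_const, filter_not, filter_mem_eq_inter,
      univ_inter, ← compl_eq_univ_sdiff, hSc]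
    norm_num
  rw [mutualInfo8_eq_three_sub, sum_eq]
  ring

end MutualInfo

lemma four_thirds_lt_logb_two_three : 4 / 3 < logb 2 3 := by
  have h : logb 2 16 < logb 2 27 := logb_lt_logb one_lt_two (by norm_num) (by norm_num)
  rw [show (16 : ℝ) = 2 ^ 4 by norm_num, show (27 : ℝ) = 3 ^ 3 by norm_num, logb_pow, logb_pow,
    logb_self_eq_one one_lt_two] at h
  push_cast at h
  linarith

/-- Suboptimality of greedy query selection: four binary queries on a uniform
variable over 8 programs, each with 1 bit of mutual information, such that every
pair avoiding `q_B` attains 2 bits while every pair containing `q_B` attains only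
`3 - (3/4)log₂ 3 < 2` bits. -/
theorem greedy_query_selection_suboptimal :
    ∃ qA qB qC qD : Fin 8 → Bool,
      qA = (fun p => decide (p.val ∈ ({0, 1, 2, 3} : Set ℕ))) ∧
      qB = (fun p => decide (p.val ∈ ({3, 4, 5, 6} : Set ℕ))) ∧
      qC = (fun p => decide (p.val ∈ ({2, 3, 4, 5} : Set ℕ))) ∧
      qD = (fun p => decide (p.val ∈ ({1, 2, 5, 7} : Set ℕ))) ∧
      mutualInfo8 qA = 1 ∧ mutualInfo8 qB = 1 ∧
      mutualInfo8 qC = 1 ∧ mutualInfo8 qD = 1 ∧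
      mutualInfo8 (fun p => (qA p, qC p)) = 2 ∧
      mutualInfo8 (fun p => (qA p, qD p)) = 2 ∧
      mutualInfo8 (fun p => (qC p, qD p)) = 2 ∧
      mutualInfo8 (fun p => (qA p, qB p)) = 3 - (3 / 4) * Real.logb 2 3 ∧
      mutualInfo8 (fun p => (qB p, qC p)) = 3 - (3 / 4) * Real.logb 2 3 ∧
      mutualInfo8 (fun p => (qB p, qD p)) = 3 - (3 / 4) * Real.logb 2 3 ∧
      3 - (3 / 4) * Real.logb 2 3 < 2 := by
  refine ⟨_, _, _, _, rfl, rfl, rfl, rfl, ?_, ?_, ?_, ?_, ?_, ?_, ?_, ?_, ?_, ?_, ?_⟩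
  · rw [mutualInfo8_of_fiberCard_eq_two_pow (n := 2) (by decide)]; norm_num
  · rw [mutualInfo8_of_fiberCard_eq_two_pow (n := 2) (by decide)]; norm_num
  · rw [mutualInfo8_of_fiberCard_eq_two_pow (n := 2) (by decide)]; norm_num
  · rw [mutualInfo8_of_fiberCard_eq_two_pow (n := 2) (by decide)]; norm_num
  · rw [mutualInfo8_of_fiberCard_eq_two_pow (n := 1) (by decide)]; norm_num
  · rw [mutualInfo8_of_fiberCard_eq_two_pow (n := 1) (by decide)]; norm_num
  · rw [mutualInfo8_of_fiberCard_eq_two_pow (n := 1) (by decide)]; norm_num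
  · exact mutualInfo8_of_fiberCard_eq_ite (S := {3, 7}) rfl (by decide)
  · exact mutualInfo8_of_fiberCard_eq_ite (S := {2, 6}) rfl (by decide)
  · exact mutualInfo8_of_fiberCard_eq_ite (S := {0, 5}) rfl (by decide)
  · linarith [four_thirds_lt_logb_two_three]
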